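/- Let F := X·(1 + X/2)⁻² ∈ X + X²ℂ[[X]], let h ∈ X + X²ℂ[[X]] be the compositional inverse of F (F∘h = X and h∘F = X), and let s ∈ ℂ[[X]] be the unique power series with coeff_0 s = 1 and s² = 1 − 2X. Then h = X·s·h', i.e. 𝔗h = h/h' = X·√(1 − 2X). (This is the boxed identity φ₄(x) = 2·ln(1 + x/2): the series φ₄ satisfies 𝔗Q(X·e^{−φ₄(X)}) = X·e^{(1/4)φ₄(−4X)}, giving the solution of 𝔗f = f(pX)/p for p⁴ = −4.) -/

import Mathlib

open PowerSeries Finset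

/-!
Substituting `h` into `F₄ · (1 + X/2)² = X` turns the inverse relation into the quadratic
equation `h = X (1 + h/2)²`. From it, `t := 1 - X (1 + h/2)` satisfies `t² = 1 - 2X` with
`t(0) = 1`, so `t = s`; and differentiating it gives `t h' = (1 + h/2)²`, i.e. `X t h' = h`.
-/

/-- Composition `f ∘ g` of formal power series (intended for `g` with zero constant
term). -/
noncomputable def pcomp (f g : PowerSeries ℂ) : PowerSeries ℂ :=
  PowerSeries.mk fun n => ∑ k ∈ range (n + 1), coeff (R := ℂ) k f * coeff (R := ℂ) n (g ^ k)

/-- The series `F = X·(1 + X/2)⁻² = X·e^{−φ₄(X)}` where `φ₄(x) = 2·ln(1+x/2)`. -/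
noncomputable def F₄ : PowerSeries ℂ := X * ((1 + C (R := ℂ) (1 / 2) * X)⁻¹) ^ 2

lemma PowerSeries.coeff_pow_eq_zero_of_lt {R : Type*} [CommRing R] {g : PowerSeries R}
    (hg : constantCoeff g = 0) {n k : ℕ} (hnk : n < k) : coeff n (g ^ k) = 0 :=
  coeff_of_lt_order n <| lt_of_lt_of_le (by exact_mod_cast hnk)
    (le_order_pow_of_constantCoeff_eq_zero k hg)

lemma pcomp_eq_subst {g : PowerSeries ℂ} (hg : constantCoeff g = 0) (f : PowerSeries ℂ) :
    pcomp f g = f.subst g := by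
  ext n
  rw [pcomp, coeff_mk, coeff_subst' (HasSubst.of_constantCoeff_zero' hg),
    finsum_eq_sum_of_support_subset (s := range (n + 1))]
  · simp only [smul_eq_mul]
  · intro k hk
    rw [coe_range, Set.mem_Iio, Nat.lt_succ_iff]
    by_contra! hnk
    exact hk (by simp only [coeff_pow_eq_zero_of_lt hg hnk, smul_zero])

lemma F₄_mul_sq : F₄ * (1 + C (1 / 2 : ℂ) * X) ^ 2 = X := by
  have hu : constantCoeff (1 + C (1 / 2 : ℂ) * X) ≠ 0 := by simp
  rw [F₄, mul_assoc, ← mul_pow, PowerSeries.inv_mul_cancel _ hu, one_pow, mul_one]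

lemma eq_X_mul_sq_of_pcomp_F₄_eq_X {h : PowerSeries ℂ} (hh0 : constantCoeff h = 0)
    (hinv : pcomp F₄ h = X) : h = X * (1 + C (1 / 2 : ℂ) * h) ^ 2 := by
  have hsub := HasSubst.of_constantCoeff_zero' hh0
  have := congrArg (subst h) F₄_mul_sq
  rw [subst_mul hsub, ← pcomp_eq_subst hh0, hinv, subst_X hsub, subst_pow hsub, subst_add hsub,
    subst_mul hsub, subst_X hsub] at this
  have h1 : subst h (1 : ℂ⟦X⟧) = 1 := by
    simpa only [coe_substAlgHom] using map_one (substAlgHom (R := ℂ) hsub)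
  have hC : subst h (C (1 / 2 : ℂ)) = C (1 / 2 : ℂ) := subst_C _
  rw [h1, hC] at this
  exact this.symm

lemma two_mul_C_half : (2 : ℂ⟦X⟧) * C (1 / 2 : ℂ) = 1 := by
  rw [← map_ofNat C 2, ← map_mul]; norm_num

section Quadratic

variable {h : PowerSeries ℂ} (hq : h = X * (1 + C (1 / 2 : ℂ) * h) ^ 2)
include hq

lemma sq_one_sub_X_mul_eq_of_eq_X_mul_sq :
    (1 - X * (1 + C (1 / 2 : ℂ) * h)) ^ 2 = 1 - 2 * X := by
  linear_combination
    (-2 * C (1 / 2 : ℂ) * X) * hq - X ^ 2 * (1 + C (1 / 2 : ℂ) * h) ^ 2 * two_mul_C_half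

lemma X_mul_one_sub_X_mul_mul_derivative_eq_of_eq_X_mul_sq :
    X * (1 - X * (1 + C (1 / 2 : ℂ) * h)) * d⁄dX ℂ h = h := by
  have hd := congrArg (d⁄dX ℂ) hq
  simp only [Derivation.leibniz, Derivation.leibniz_pow, map_add, Derivation.map_one_eq_zero,
    derivative_C, derivative_X, smul_eq_mul, nsmul_eq_mul, Nat.add_one_sub_one, pow_one,
    mul_zero, zero_add, add_zero, mul_one, Nat.cast_ofNat] at hd
  linear_combination
    X * hd - hq + X ^ 2 * (1 + C (1 / 2 : ℂ) * h) * d⁄dX ℂ h * two_mul_C_half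

end Quadratic

lemma PowerSeries.eq_of_sq_eq_sq_of_constantCoeff_eq_one {R : Type*} [CommRing R] [IsDomain R]
    [NeZero (2 : R)] {s t : PowerSeries R} (hst : s ^ 2 = t ^ 2)
    (hs : constantCoeff s = 1) (ht : constantCoeff t = 1) : s = t := by
  refine (sq_eq_sq_iff_eq_or_eq_neg.mp hst).resolve_right fun hneg => ?_
  have := congrArg constantCoeff hneg
  rw [map_neg, hs, ht, eq_neg_iff_add_eq_zero, one_add_one_eq_two] at this
  exact two_ne_zero this

theorem statement11_general (h : PowerSeries ℂ)
    (hh0 : coeff (R := ℂ) 0 h = 0)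
    (hinv1 : pcomp F₄ h = X)
    (s : PowerSeries ℂ)
    (hs0 : coeff (R := ℂ) 0 s = 1)
    (hs : s ^ 2 = 1 - 2 * X) :
    h = X * s * d⁄dX ℂ h := by
  rw [coeff_zero_eq_constantCoeff_apply] at hh0 hs0
  have hq := eq_X_mul_sq_of_pcomp_F₄_eq_X hh0 hinv1
  have hst : s = 1 - X * (1 + C (1 / 2 : ℂ) * h) :=
    eq_of_sq_eq_sq_of_constantCoeff_eq_one
      (hs.trans (sq_one_sub_X_mul_eq_of_eq_X_mul_sq hq).symm) hs0 (by simp [hh0])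
  rw [hst]
  exact (X_mul_one_sub_X_mul_mul_derivative_eq_of_eq_X_mul_sq hq).symm

/-- **The boxed identity `φ₄(x) = 2·ln(1 + x/2)`.**  Let `h` be the compositional
inverse of `F₄ = X·(1+X/2)⁻²` and let `s` be the square root of `1 − 2X` with
constant term `1`.  Then `𝔗h = h/h' = X·√(1 − 2X)`, i.e. `h = X·s·h'`.
(This expresses `𝔗Q(X·e^{−φ₄(X)}) = X·e^{(1/4)φ₄(−4X)}`, the solution of
`𝔗f = f(pX)/p` for `p⁴ = −4`.) -/
theorem statement11 (h : PowerSeries ℂ)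
    (hh0 : coeff (R := ℂ) 0 h = 0) (hh1 : coeff (R := ℂ) 1 h = 1)
    (hinv1 : pcomp F₄ h = X) (hinv2 : pcomp h F₄ = X)
    (s : PowerSeries ℂ)
    (hs0 : coeff (R := ℂ) 0 s = 1)
    (hs : s ^ 2 = 1 - 2 * X) :
    h = X * s * d⁄dX ℂ h :=
  statement11_general h hh0 hinv1 s hs0 hs
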